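/- arXiv:1402.7205 — 3 statements merged into one kernel-verified Lean document; each statement's English description precedes it below -/
import Mathlib

section
/- Let S ⊆ ℤ^n be an additive subsemigroup containing 0 with no nonzero invertible element (s ∈ S and -s ∈ S implies s = 0), and suppose S is finitely generated. Then there exists a linear functional ℓ : ℤ^n → ℤ and a total order ≺ on S such that ≺ is compatible with addition (s₁ ≺ s₂ implies s₁ + s₃ ≺ s₂ + s₃ for all s₃ ∈ S) and 0 ≺ s for all s ∈ S \ {0}. -/
/-!
Gordan's alternative over `ℤ`: as `S` is pointed, its nonzero generators satisfy no nontrivial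
nonnegative integer relation, hence some integer functional `ℓ` is positive on all of them, and
so on `S \ {0}`. The functional is built by induction on the number of vectors: if the functional
`ℓ` for the others is not positive on the new vector `v₀`, either `ℓ v₀ = 0` and a large multiple
of `ℓ` plus any functional positive at `v₀` works, or `ℓ v₀ < 0` and the same trick applies to a
functional for the projections of the others along `v₀` onto `ker ℓ`, perturbed by `-ℓ`.
The order compares `ℓ` first and breaks ties lexicographically; both steps respect addition.
-/

open Module Filter

def NonnegIndependent (R : Type*) {ι M : Type*} [Semiring R] [PartialOrder R]
    [AddCommMonoid M] [Module R M] [Fintype ι] (v : ι → M) : Prop :=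
  ∀ c : ι → R, 0 ≤ c → ∑ i, c i • v i = 0 → c = 0

lemma exists_nsmul_add_pos {ι R : Type*} [Finite ι] [AddCommGroup R] [LinearOrder R]
    [IsOrderedAddMonoid R] [Archimedean R] {a : ι → R} (ha : ∀ i, 0 < a i) (b : ι → R) :
    ∃ N : ℕ, ∀ i, 0 < N • a i + b i := by
  have h : ∀ i, ∀ᶠ N : ℕ in atTop, a i - b i ≤ N • a i := fun i =>
    (tendsto_id.atTop_nsmul_const (ha i)).eventually_ge_atTop _
  obtain ⟨N, hN⟩ := (eventually_all.2 h).exists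
  exact ⟨N, fun i => (ha i).trans_le (sub_le_iff_le_add.1 (hN i))⟩

namespace NonnegIndependent

section Semiring

variable {R M : Type*} [Semiring R] [PartialOrder R] [AddCommMonoid M] [Module R M]

lemma comp_equiv {ι κ : Type*} [Fintype ι] [Fintype κ] {v : ι → M}
    (h : NonnegIndependent R v) (e : κ ≃ ι) : NonnegIndependent R (v ∘ e) := by
  intro c hc hsum
  have := h (c ∘ e.symm) (fun i => hc _) (by simpa [← e.sum_comp] using hsum)
  ext k
  simpa using congrFun this (e k)

lemma tail {k : ℕ} {v : Fin (k + 1) → M} (h : NonnegIndependent R v) :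
    NonnegIndependent R fun i : Fin k => v i.succ := by
  intro c hc hsum
  have := h (Fin.cons 0 c) (Fin.le_cons.2 ⟨le_rfl, hc⟩)
    (by simpa [Fin.sum_univ_succ] using hsum)
  ext i
  simpa using congrFun this i.succ

end Semiring

variable {R M : Type*} [CommRing R] [LinearOrder R] [IsStrictOrderedRing R]
  [AddCommGroup M] [Module R M]

lemma ne_zero {ι : Type*} [Fintype ι] {v : ι → M} (h : NonnegIndependent R v) (i : ι) :
    v i ≠ 0 := by
  classical
  intro hi
  have := congrFun (h (Pi.single i 1) (Pi.single_nonneg.2 zero_le_one) (by simp [hi])) i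
  simp at this

variable {k : ℕ} {v : Fin (k + 1) → M}

lemma projection (h : NonnegIndependent R v) {ℓ : Dual R M}
    (hℓ : ∀ i, 0 ≤ ℓ (v (Fin.succ i))) (hℓ₀ : ℓ (v 0) < 0) :
    NonnegIndependent R fun i : Fin k => ℓ (v i.succ) • v 0 - ℓ (v 0) • v i.succ := by
  intro c hc hsum
  have hcoef :
      (Fin.cons (∑ i, c i * ℓ (v i.succ)) fun i => -ℓ (v 0) * c i : Fin (k + 1) → R) = 0 := by
    refine h _ (Fin.le_cons.2 ⟨Finset.sum_nonneg fun i _ => mul_nonneg (hc i) (hℓ i),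
      fun i => mul_nonneg (neg_nonneg.2 hℓ₀.le) (hc i)⟩) ?_
    rw [Fin.sum_univ_succ, ← hsum]
    simp only [Fin.cons_zero, Fin.cons_succ, Finset.sum_smul, ← Finset.sum_add_distrib]
    refine Finset.sum_congr rfl fun i _ => ?_
    module
  ext i
  simpa [hℓ₀.ne] using congrFun hcoef i.succ

variable [Archimedean R]

lemma exists_nsmul_add_apply_pos {φ μ : Dual R M} (hφ₀ : φ (v 0) = 0)
    (hφ : ∀ i, 0 < φ (v (Fin.succ i))) (hμ₀ : 0 < μ (v 0)) :
    ∃ N : ℕ, ∀ i, 0 < (N • φ + μ) (v i) := by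
  obtain ⟨N, hN⟩ := exists_nsmul_add_pos hφ fun i => μ (v i.succ)
  exact ⟨N, Fin.cases (by simpa [hφ₀] using hμ₀) (by simpa using hN)⟩

lemma exists_dual_pos_of_succ [Projective R M]
    (ih : ∀ w : Fin k → M, NonnegIndependent R w → ∃ ℓ : Dual R M, ∀ i, 0 < ℓ (w i))
    (h : NonnegIndependent R v) : ∃ ℓ : Dual R M, ∀ i, 0 < ℓ (v i) := by
  obtain ⟨ℓ, hℓ⟩ := ih _ h.tail
  rcases lt_trichotomy (ℓ (v 0)) 0 with hneg | hzero | hpos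
  · obtain ⟨ℓ', hℓ'⟩ := ih _ (h.projection (fun i => (hℓ i).le) hneg)
    -- `ℓ' ∘ π` vanishes at `v 0` and is positive at the other vectors, `-ℓ` is positive at `v 0`
    let π : M →ₗ[R] M := ℓ.smulRight (v 0) - ℓ (v 0) • LinearMap.id
    obtain ⟨N, hN⟩ := exists_nsmul_add_apply_pos (v := v) (φ := ℓ' ∘ₗ π) (μ := -ℓ)
      (by simp [π]) (fun i => by simpa [π] using hℓ' i) (by simpa using hneg)
    exact ⟨_, hN⟩
  · obtain ⟨f, hf⟩ := Projective.exists_dual_ne_zero R (h.ne_zero 0)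
    obtain ⟨N, hN⟩ := exists_nsmul_add_apply_pos (μ := f (v 0) • f) hzero hℓ
      (by simpa using mul_self_pos.2 hf)
    exact ⟨_, hN⟩
  · exact ⟨ℓ, Fin.cases hpos hℓ⟩

theorem exists_dual_pos [Projective R M] {ι : Type*} [Fintype ι] {v : ι → M}
    (h : NonnegIndependent R v) : ∃ ℓ : Dual R M, ∀ i, 0 < ℓ (v i) := by
  have key (k : ℕ) (w : Fin k → M) (hw : NonnegIndependent R w) :
      ∃ ℓ : Dual R M, ∀ i, 0 < ℓ (w i) := by
    induction k with
    | zero => exact ⟨0, fun i => i.elim0⟩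
    | succ k ih => exact exists_dual_pos_of_succ ih hw
  obtain ⟨ℓ, hℓ⟩ := key _ _ (h.comp_equiv (Fintype.equivFin ι).symm)
  exact ⟨ℓ, fun i => by simpa using hℓ (Fintype.equivFin ι i)⟩

end NonnegIndependent

namespace AddSubmonoid

variable {M : Type*} [AddCommGroup M]

lemma nonnegIndependent_of_pointed [IsAddTorsionFree M] {S : AddSubmonoid M}
    (hS : ∀ s ∈ S, -s ∈ S → s = 0) {ι : Type*} [Fintype ι] {v : ι → M}
    (hvS : ∀ i, v i ∈ S) (hv₀ : ∀ i, v i ≠ 0) : NonnegIndependent ℤ v := by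
  classical
  intro c hc hsum
  lift c to ι → ℕ using hc
  simp only [natCast_zsmul] at hsum
  ext i
  have hneg : -(c i • v i) = ∑ j ∈ Finset.univ.erase i, c j • v j := by
    rw [neg_eq_iff_add_eq_zero, add_comm, Finset.sum_erase_add _ _ (Finset.mem_univ i), hsum]
  have := hS _ (S.nsmul_mem (hvS i) _) (hneg ▸ S.sum_mem fun j _ => S.nsmul_mem (hvS j) _)
  simpa using (nsmul_eq_zero_iff_left (hv₀ i)).1 this

lemma eq_zero_or_pos_of_mem_closure {R G : Type*} [AddCommMonoid R] [PartialOrder R]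
    [IsOrderedCancelAddMonoid R] [FunLike G M R] [AddMonoidHomClass G M R] {f : G} {s : Set M}
    (hf : ∀ x ∈ s, x ≠ 0 → 0 < f x) {x : M} (hx : x ∈ closure s) : x = 0 ∨ 0 < f x := by
  induction hx using closure_induction with
  | mem x hx => exact (eq_or_ne x 0).imp_right (hf x hx)
  | zero => exact .inl rfl
  | add x y _ _ hx hy =>
    rcases hx with rfl | hx
    · simpa using hy
    rcases hy with rfl | hy
    · simpa using Or.inr hx
    exact .inr (by rw [map_add]; exact add_pos hx hy)

theorem exists_dual_pos_of_fg [IsAddTorsionFree M] [Projective ℤ M] {S : AddSubmonoid M}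
    (hfg : S.FG) (hS : ∀ s ∈ S, -s ∈ S → s = 0) :
    ∃ ℓ : Dual ℤ M, ∀ s ∈ S, s ≠ 0 → 0 < ℓ s := by
  classical
  obtain ⟨F, rfl⟩ := hfg
  obtain ⟨ℓ, hℓ⟩ := (nonnegIndependent_of_pointed hS (v := fun x : F.erase 0 => (x : M))
    (fun x => subset_closure (Finset.mem_of_mem_erase x.2))
    (fun x => Finset.ne_of_mem_erase x.2)).exists_dual_pos
  exact ⟨ℓ, fun s hs hs₀ => (eq_zero_or_pos_of_mem_closure
    (fun x hx hx₀ => hℓ ⟨x, Finset.mem_erase.2 ⟨hx₀, hx⟩⟩) hs).resolve_left hs₀⟩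

end AddSubmonoid

/-- A finitely generated additive subsemigroup `S ⊆ ℤ^n` containing `0`
with no nonzero invertible element admits a linear functional `ℓ : ℤ^n → ℤ` and a
total order `≺` on `S`, compatible with addition and having `0` as least element. -/
theorem sparse_gb_stmt1 (n : ℕ) (S : AddSubmonoid (Fin n → ℤ))
    (hfg : ∃ F : Finset (Fin n → ℤ), AddSubmonoid.closure (F : Set (Fin n → ℤ)) = S)
    (hptd : ∀ s ∈ S, -s ∈ S → s = 0) :
    ∃ (ℓ : (Fin n → ℤ) →ₗ[ℤ] ℤ) (r : (Fin n → ℤ) → (Fin n → ℤ) → Prop),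
      -- `ℓ` is strictly positive on `S \ {0}` and `r` refines `ℓ`
      (∀ s ∈ S, s ≠ 0 → 0 < ℓ s) ∧
      (∀ s₁ ∈ S, ∀ s₂ ∈ S, r s₁ s₂ → ℓ s₁ ≤ ℓ s₂) ∧
      -- `r` is a strict total order on `S`
      (∀ s ∈ S, ¬ r s s) ∧
      (∀ s₁ ∈ S, ∀ s₂ ∈ S, ∀ s₃ ∈ S, r s₁ s₂ → r s₂ s₃ → r s₁ s₃) ∧
      (∀ s₁ ∈ S, ∀ s₂ ∈ S, s₁ ≠ s₂ → r s₁ s₂ ∨ r s₂ s₁) ∧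
      -- compatibility with addition
      (∀ s₁ ∈ S, ∀ s₂ ∈ S, ∀ s₃ ∈ S, r s₁ s₂ → r (s₁ + s₃) (s₂ + s₃)) ∧
      -- `0` is the least element
      (∀ s ∈ S, s ≠ 0 → r 0 s) := by
  obtain ⟨ℓ, hℓ⟩ := AddSubmonoid.exists_dual_pos_of_fg hfg hptd
  let key : (Fin n → ℤ) → ℤ ×ₗ Lex (Fin n → ℤ) := fun s => toLex (ℓ s, toLex s)
  have key_add (a b : Fin n → ℤ) : key (a + b) = key a + key b :=
    congrArg toLex (Prod.ext (map_add ℓ a b) rfl)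
  refine ⟨ℓ, fun a b => key a < key b, hℓ, fun a _ b _ hab => ?_, fun _ _ => lt_irrefl _,
    fun _ _ _ _ _ _ => lt_trans, fun a _ b _ hab => lt_or_gt_of_ne fun h => hab ?_,
    fun a _ b _ c _ hab => ?_, fun s hs hs₀ => Prod.Lex.toLex_lt_toLex.2 (.inl ?_)⟩
  · exact (Prod.Lex.toLex_lt_toLex.1 hab).elim le_of_lt fun h => h.1.le
  · exact congrArg (fun x => ofLex (ofLex x).2) h
  · simpa only [key_add] using add_lt_add_left hab (key c)
  · simpa using hℓ s hs hs₀
end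

section
/- Let M ⊆ ℤ^n be a finite set containing 0 such that the semigroup S_M generated by M has no nonzero invertible element, and let χ : k[S_M^{(h)}] → k[S_M] be the dehomogenization map X^{(s,d)} ↦ X^s. Let ≺ be a graded admissible ordering on k[S_M^{(h)}] with associated ordering ≺' on k[S_M]. If G is a finite set of homogeneous elements of a homogeneous ideal I ⊆ k[S_M^{(h)}] such that every leading monomial of a nonzero element of I is divisible by the leading monomial of some g ∈ G, then every leading monomial (with respect to ≺') of a nonzero element of χ(I) is divisible by the leading monomial of χ(g) for some g ∈ G. -/
/-!
Write `f' = χ f` with `f ∈ I`. Since `0 ∈ M`, the monomial `t = X^{(0,1)}` lies in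
`k[S_M^{(h)}]` and `χ t = 1`. Multiplying each homogeneous component `f_d` of `f` by
`t^{D-d}`, for `D` an upper bound of the degrees occurring in `f`, gives a homogeneous element
of `I` with the same image `f'`. On a homogeneous element `χ` is injective on the support and
the graded ordering restricts to `≺'`, so leading monomials correspond under `(s, d) ↦ s`; a
leading monomial of `G` dividing that of the homogenized element therefore maps to one
dividing `LM(f')`.
-/

open AddMonoidAlgebra

/-- The affine semigroup `S_M ⊆ ℤ^n` generated by `M`. -/
def sgS (n : ℕ) (M : Finset (Fin n → ℤ)) : AddSubmonoid (Fin n → ℤ) :=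
  AddSubmonoid.closure (M : Set (Fin n → ℤ))

/-- The homogeneous semigroup `S_M^{(h)} ⊆ ℤ^{n+1}` generated by `{(α,1) : α ∈ M}`. -/
def sgSh (n : ℕ) (M : Finset (Fin n → ℤ)) : AddSubmonoid ((Fin n → ℤ) × ℤ) :=
  AddSubmonoid.closure ((fun α => (α, (1 : ℤ))) '' (M : Set (Fin n → ℤ)))

lemma sgSh_le_comap_fst (n : ℕ) (M : Finset (Fin n → ℤ)) :
    sgSh n M ≤ (sgS n M).comap (AddMonoidHom.fst (Fin n → ℤ) ℤ) := by
  rw [sgSh, AddSubmonoid.closure_le]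
  rintro x ⟨α, hα, rfl⟩
  exact AddSubmonoid.subset_closure hα

/-- The additive monoid morphism `S_M^{(h)} → S_M`, `(s,d) ↦ s`. -/
def sgFst (n : ℕ) (M : Finset (Fin n → ℤ)) : (sgSh n M) →+ (sgS n M) :=
  AddMonoidHom.codRestrict ((AddMonoidHom.fst (Fin n → ℤ) ℤ).domRestrict (sgSh n M)) _
    (fun x => sgSh_le_comap_fst n M x.2)

/-- The dehomogenization morphism `χ_M : k[S_M^{(h)}] → k[S_M]`, `X^{(s,d)} ↦ X^s`. -/
noncomputable def sgChi (n : ℕ) (M : Finset (Fin n → ℤ)) (k : Type*) [CommRing k] :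
    AddMonoidAlgebra k (sgSh n M) →ₐ[k] AddMonoidAlgebra k (sgS n M) :=
  AddMonoidAlgebra.mapDomainAlgHom k k (sgFst n M)

/-- `m` is the leading monomial of `f` with respect to the strict order `r`. -/
def IsLMOf {σ : Type*} {k : Type*} [Field k] (r : σ → σ → Prop)
    (f : AddMonoidAlgebra k σ) (m : σ) : Prop :=
  m ∈ f.coeff.support ∧ ∀ m' ∈ f.coeff.support, m' ≠ m → r m' m

section LeadingMonomial

variable {σ τ k : Type*} [Field k]

theorem IsLMOf.ne_zero {r : σ → σ → Prop} {f : AddMonoidAlgebra k σ} {m : σ}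
    (h : IsLMOf r f m) : f ≠ 0 := by
  rintro rfl
  simpa using h.1

theorem isLMOf_mapDomain_iff {r : σ → σ → Prop} {s : τ → τ → Prop} {φ : σ → τ}
    {f : AddMonoidAlgebra k σ} (hφ : Set.InjOn φ f.coeff.support)
    (hrs : ∀ a ∈ f.coeff.support, ∀ b ∈ f.coeff.support, s (φ a) (φ b) ↔ r a b) (m' : τ) :
    IsLMOf s (AddMonoidAlgebra.mapDomain φ f) m' ↔ ∃ m, IsLMOf r f m ∧ φ m = m' := by
  classical
  simp only [IsLMOf, AddMonoidAlgebra.coeff_mapDomain, Finsupp.mapDomain_support_of_injOn _ hφ]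
  constructor
  · rintro ⟨hm', hmax⟩
    obtain ⟨m, hm, rfl⟩ := Finset.mem_image.mp hm'
    refine ⟨m, ⟨hm, fun a ha hne => (hrs a ha m hm).mp ?_⟩, rfl⟩
    exact hmax _ (Finset.mem_image_of_mem φ ha) (hne ∘ hφ ha hm)
  · rintro ⟨m, ⟨hm, hmax⟩, rfl⟩
    refine ⟨Finset.mem_image_of_mem φ hm, fun a' ha' hne => ?_⟩
    obtain ⟨a, ha, rfl⟩ := Finset.mem_image.mp ha'
    exact (hrs a ha m hm).mpr (hmax a ha (ne_of_apply_ne φ hne))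

end LeadingMonomial

theorem AddMonoidAlgebra.sum_filter_image_eq_self {σ ι R : Type*} [Semiring R] [DecidableEq ι]
    (deg : σ → ι) (f : AddMonoidAlgebra R σ) :
    ∑ d ∈ f.coeff.support.image deg, ofCoeff (f.coeff.filter (deg · = d)) = f := by
  ext m
  simp only [coeff_sum, Finsupp.finsetSum_apply, Finsupp.filter_apply, Finset.sum_ite_eq]
  split_ifs with h
  · rfl
  · exact (Finsupp.notMem_support_iff.mp fun hm => h (Finset.mem_image_of_mem deg hm)).symm

section Dehomogenization

variable {n : ℕ} {M : Finset (Fin n → ℤ)} {k : Type*}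

def sgDeg (n : ℕ) (M : Finset (Fin n → ℤ)) : sgSh n M →+ ℤ :=
  (AddMonoidHom.snd (Fin n → ℤ) ℤ).comp (sgSh n M).subtype

theorem sgS_eq_map_fst_sgSh :
    sgS n M = (sgSh n M).map (AddMonoidHom.fst (Fin n → ℤ) ℤ) := by
  rw [sgS, sgSh, AddMonoidHom.map_mclosure, Set.image_image]
  simp

theorem sgFst_surjective : Function.Surjective (sgFst n M) := by
  rintro ⟨s, hs⟩
  rw [sgS_eq_map_fst_sgSh] at hs
  obtain ⟨x, hx, rfl⟩ := AddSubmonoid.mem_map.mp hs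
  exact ⟨⟨x, hx⟩, rfl⟩

theorem sgChi_surjective [CommRing k] : Function.Surjective (sgChi n M k) := by
  intro y
  obtain ⟨x, hx⟩ := Finsupp.mapDomain_surjective sgFst_surjective y.coeff
  exact ⟨ofCoeff x, coeff_injective hx⟩

theorem sgFst_injOn_of_mem_gradeBy [CommRing k] {f : AddMonoidAlgebra k (sgSh n M)} {d : ℤ}
    (hf : f ∈ gradeBy k (sgDeg n M) d) : Set.InjOn (sgFst n M) f.coeff.support :=
  fun a ha b hb hab =>
    Subtype.ext <| Prod.ext (congrArg Subtype.val hab) ((hf a ha).trans (hf b hb).symm)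

theorem isLMOf_sgChi_iff [Field k] {r' : (Fin n → ℤ) → (Fin n → ℤ) → Prop}
    {rh : sgSh n M → sgSh n M → Prop}
    (hrh : ∀ a b : sgSh n M, sgDeg n M a = sgDeg n M b → (rh a b ↔ r' a.1.1 b.1.1))
    {f : AddMonoidAlgebra k (sgSh n M)} {d : ℤ} (hf : f ∈ gradeBy k (sgDeg n M) d)
    (m' : sgS n M) :
    IsLMOf (fun a b : sgS n M => r' a b) (sgChi n M k f) m' ↔
      ∃ m, IsLMOf rh f m ∧ sgFst n M m = m' :=
  isLMOf_mapDomain_iff (sgFst_injOn_of_mem_gradeBy hf)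
    (fun a ha b hb => (hrh a b ((hf a ha).trans (hf b hb).symm)).symm) m'

def sgT (h0 : (0 : Fin n → ℤ) ∈ M) : sgSh n M :=
  ⟨(0, 1), AddSubmonoid.subset_closure ⟨0, h0, rfl⟩⟩

theorem sgChi_single_nsmul_sgT [CommRing k] (h0 : (0 : Fin n → ℤ) ∈ M) (e : ℕ) :
    sgChi n M k (single (e • sgT h0) 1) = 1 := by
  have hfst : sgFst n M (sgT h0) = 0 := rfl
  rw [sgChi, mapDomainAlgHom_apply, mapDomain_single, map_nsmul, hfst, nsmul_zero]
  rfl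

theorem exists_mem_gradeBy_sgChi_eq [CommRing k] (h0 : (0 : Fin n → ℤ) ∈ M)
    {I : Ideal (AddMonoidAlgebra k (sgSh n M))}
    (hIhom : ∀ f ∈ I, ∀ d : ℤ,
      ofCoeff (f.coeff.filter fun m : sgSh n M => (m : (Fin n → ℤ) × ℤ).2 = d) ∈ I)
    {f : AddMonoidAlgebra k (sgSh n M)} (hf : f ∈ I) :
    ∃ fh ∈ I, ∃ D, fh ∈ gradeBy k (sgDeg n M) D ∧ sgChi n M k fh = sgChi n M k f := by
  set T := f.coeff.support.image (sgDeg n M)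
  set F : ℤ → AddMonoidAlgebra k (sgSh n M) := fun d =>
    ofCoeff (f.coeff.filter (sgDeg n M · = d))
  obtain ⟨D, hD⟩ := T.bddAbove
  refine ⟨∑ d ∈ T, single ((D - d).toNat • sgT h0) 1 * F d, ?_, D, ?_, ?_⟩
  · exact Ideal.sum_mem _ fun d _ => Ideal.mul_mem_left _ _ (hIhom f hf d)
  · refine Submodule.sum_mem _ fun d hd => ?_
    have hF : F d ∈ gradeBy k (sgDeg n M) d := fun m hm => (Finset.mem_filter.mp hm).2
    have hdeg : sgDeg n M ((D - d).toNat • sgT h0) + d = D := by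
      change (D - d).toNat • (1 : ℤ) + d = D
      rw [nsmul_one, Int.toNat_of_nonneg (sub_nonneg.mpr (hD hd)), sub_add_cancel]
    have hmul := SetLike.mul_mem_graded
      (single_mem_gradeBy (sgDeg n M) ((D - d).toNat • sgT h0) (1 : k)) hF
    rwa [hdeg] at hmul
  · conv_rhs => rw [← sum_filter_image_eq_self (sgDeg n M) f]
    simp only [map_sum, map_mul, sgChi_single_nsmul_sgT, one_mul, F, T]

end Dehomogenization

theorem sparse_gb_stmt5_general (n : ℕ) (k : Type*) [Field k] (M : Finset (Fin n → ℤ))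
    (h0 : (0 : Fin n → ℤ) ∈ M)
    -- `r'` is an admissible ordering on the monomials of `k[S_M]`
    (r' : (Fin n → ℤ) → (Fin n → ℤ) → Prop)
    -- `rh` is the associated graded ordering on the monomials of `k[S_M^{(h)}]`
    (rh : (sgSh n M) → (sgSh n M) → Prop)
    (hrh : ∀ a b : sgSh n M, rh a b ↔
      ((a : (Fin n → ℤ) × ℤ).2 < (b : (Fin n → ℤ) × ℤ).2 ∨
        ((a : (Fin n → ℤ) × ℤ).2 = (b : (Fin n → ℤ) × ℤ).2 ∧
          r' (a : (Fin n → ℤ) × ℤ).1 (b : (Fin n → ℤ) × ℤ).1)))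
    -- `I` is a homogeneous ideal of `k[S_M^{(h)}]`
    (I : Ideal (AddMonoidAlgebra k (sgSh n M)))
    (hIhom : ∀ f ∈ I, ∀ d : ℤ,
      AddMonoidAlgebra.ofCoeff (Finsupp.filter (fun m : sgSh n M => (m : (Fin n → ℤ) × ℤ).2 = d) f.coeff) ∈ I)
    -- `G` is a finite set of homogeneous elements of `I` whose leading monomials
    -- divide the leading monomial of every nonzero element of `I`
    (G : Finset (AddMonoidAlgebra k (sgSh n M)))
    (hGhom : ∀ g ∈ G, ∃ d : ℤ, ∀ m ∈ g.coeff.support, (m : (Fin n → ℤ) × ℤ).2 = d)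
    (hGB : ∀ f ∈ I, f ≠ 0 → ∀ m, IsLMOf rh f m →
      ∃ g ∈ G, ∃ mg, IsLMOf rh g mg ∧ ∃ c : sgSh n M, m = mg + c) :
    -- conclusion: leading monomials of `χ_M(G)` divide every leading monomial of `χ_M(I)`
    ∀ f' ∈ Ideal.map (sgChi n M k) I, f' ≠ 0 →
      ∀ m', IsLMOf (fun a b : sgS n M => r' (a : Fin n → ℤ) (b : Fin n → ℤ)) f' m' →
        ∃ g ∈ G, ∃ mg', IsLMOf (fun a b : sgS n M => r' (a : Fin n → ℤ) (b : Fin n → ℤ))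
          (sgChi n M k g) mg' ∧ ∃ c : sgS n M, m' = mg' + c := by
  have hrh_deg (a b : sgSh n M) (hab : sgDeg n M a = sgDeg n M b) : rh a b ↔ r' a.1.1 b.1.1 := by
    change (a : (Fin n → ℤ) × ℤ).2 = (b : (Fin n → ℤ) × ℤ).2 at hab
    simp [hrh, hab]
  intro f' hf' _ m' hm'
  obtain ⟨f, hf, rfl⟩ := (Ideal.mem_map_iff_of_surjective _ sgChi_surjective).mp hf'
  obtain ⟨fh, hfh, D, hfhD, hchi⟩ := exists_mem_gradeBy_sgChi_eq h0 hIhom hf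
  rw [← hchi] at hm'
  obtain ⟨m, hm, rfl⟩ := (isLMOf_sgChi_iff hrh_deg hfhD m').mp hm'
  obtain ⟨g, hgG, mg, hmg, c, rfl⟩ := hGB fh hfh hm.ne_zero m hm
  obtain ⟨dg, hg⟩ := hGhom g hgG
  exact ⟨g, hgG, sgFst n M mg, (isLMOf_sgChi_iff hrh_deg hg _).mpr ⟨mg, hmg, rfl⟩,
    sgFst n M c, map_add _ _ _⟩

/-- dehomogenizing a homogeneous sparse Gröbner basis (w.r.t. a graded
admissible ordering) yields a sparse Gröbner basis of the dehomogenized ideal. -/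
theorem sparse_gb_stmt5 (n : ℕ) (k : Type*) [Field k] (M : Finset (Fin n → ℤ))
    (h0 : (0 : Fin n → ℤ) ∈ M)
    (hptd : ∀ s ∈ sgS n M, -s ∈ sgS n M → s = 0)
    -- `r'` is an admissible ordering on the monomials of `k[S_M]`
    (r' : (Fin n → ℤ) → (Fin n → ℤ) → Prop)
    (hirr : ∀ s ∈ sgS n M, ¬ r' s s)
    (htrans : ∀ s₁ ∈ sgS n M, ∀ s₂ ∈ sgS n M, ∀ s₃ ∈ sgS n M, r' s₁ s₂ → r' s₂ s₃ → r' s₁ s₃)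
    (htotal : ∀ s₁ ∈ sgS n M, ∀ s₂ ∈ sgS n M, s₁ ≠ s₂ → r' s₁ s₂ ∨ r' s₂ s₁)
    (hcompat : ∀ s₁ ∈ sgS n M, ∀ s₂ ∈ sgS n M, ∀ s₃ ∈ sgS n M, r' s₁ s₂ → r' (s₁ + s₃) (s₂ + s₃))
    (hzero : ∀ s ∈ sgS n M, s ≠ 0 → r' 0 s)
    -- `rh` is the associated graded ordering on the monomials of `k[S_M^{(h)}]`
    (rh : (sgSh n M) → (sgSh n M) → Prop)
    (hrh : ∀ a b : sgSh n M, rh a b ↔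
      ((a : (Fin n → ℤ) × ℤ).2 < (b : (Fin n → ℤ) × ℤ).2 ∨
        ((a : (Fin n → ℤ) × ℤ).2 = (b : (Fin n → ℤ) × ℤ).2 ∧
          r' (a : (Fin n → ℤ) × ℤ).1 (b : (Fin n → ℤ) × ℤ).1)))
    -- `I` is a homogeneous ideal of `k[S_M^{(h)}]`
    (I : Ideal (AddMonoidAlgebra k (sgSh n M)))
    (hIhom : ∀ f ∈ I, ∀ d : ℤ,
      AddMonoidAlgebra.ofCoeff (Finsupp.filter (fun m : sgSh n M => (m : (Fin n → ℤ) × ℤ).2 = d) f.coeff) ∈ I)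
    -- `G` is a finite set of homogeneous elements of `I` whose leading monomials
    -- divide the leading monomial of every nonzero element of `I`
    (G : Finset (AddMonoidAlgebra k (sgSh n M)))
    (hGI : ∀ g ∈ G, g ∈ I)
    (hGhom : ∀ g ∈ G, ∃ d : ℤ, ∀ m ∈ g.coeff.support, (m : (Fin n → ℤ) × ℤ).2 = d)
    (hGB : ∀ f ∈ I, f ≠ 0 → ∀ m, IsLMOf rh f m →
      ∃ g ∈ G, ∃ mg, IsLMOf rh g mg ∧ ∃ c : sgSh n M, m = mg + c) :
    -- conclusion: leading monomials of `χ_M(G)` divide every leading monomial of `χ_M(I)`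
    ∀ f' ∈ Ideal.map (sgChi n M k) I, f' ≠ 0 →
      ∀ m', IsLMOf (fun a b : sgS n M => r' (a : Fin n → ℤ) (b : Fin n → ℤ)) f' m' →
        ∃ g ∈ G, ∃ mg', IsLMOf (fun a b : sgS n M => r' (a : Fin n → ℤ) (b : Fin n → ℤ))
          (sgChi n M k g) mg' ∧ ∃ c : sgS n M, m' = mg' + c :=
  sparse_gb_stmt5_general n k M h0 r' rh hrh I hIhom G hGhom hGB
end

section
/- Let S ⊆ ℤ^n be an affine semigroup with Hilbert basis {p₁,…,p_r}, I ⊆ k[S] an ideal, φ : k[H₁,…,H_r] → k[S] the monomial map H_i ↦ X^{p_i}, and ψ : (k̄*)^n → k̄^r the map x ↦ (x^{p₁},…,x^{p_r}) (where x^p = ∏ x_j^{p_j}). Then ψ(Var(I) ∩ (k̄*)^n) = Var(φ^{-1}(I)) ∩ (k̄*)^r. -/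
open AddMonoidAlgebra MvPolynomial

noncomputable instance sparseAux.rootNat (K : Type*) [Field K] [IsAlgClosed K] :
    RootableBy Kˣ ℕ :=
  rootableByOfPowLeftSurj _ _ fun {m} hm u => by
    obtain ⟨z, hz⟩ := IsAlgClosed.exists_pow_nat_eq (k := K) (u : K) (Nat.pos_of_ne_zero hm)
    have hz0 : z ≠ 0 := fun h => u.ne_zero (by rw [← hz, h, zero_pow hm])
    exact ⟨Units.mk0 z hz0, Units.ext (by simpa using hz)⟩

noncomputable instance sparseAux.divInt (K : Type*) [Field K] [IsAlgClosed K] :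
    DivisibleBy (Additive Kˣ) ℤ :=
  haveI : RootableBy Kˣ ℤ := Group.rootableByIntOfRootableByNat Kˣ
  { div := fun a z => Additive.ofMul (RootableBy.root a.toMul z)
    div_zero := fun a => congrArg Additive.ofMul (RootableBy.root_zero a.toMul)
    div_cancel := fun {z} a hz => by
      apply Additive.toMul.injective
      rw [toMul_zsmul]
      exact RootableBy.root_cancel _ hz }

/-- The character of the torus point `x`, as a monoid hom on `Multiplicative S`. -/
noncomputable def sparseAux.char {n : ℕ} {K : Type*} [Field K]
    (S : AddSubmonoid (Fin n → ℤ)) (x : Fin n → K) (hx : ∀ j, x j ≠ 0) :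
    Multiplicative S →* K where
  toFun s := ∏ j, x j ^ ((Multiplicative.toAdd s).val j)
  map_one' := by simp
  map_mul' s t := by
    simp only [toAdd_mul, AddSubmonoid.coe_add, Pi.add_apply]
    rw [← Finset.prod_mul_distrib]
    exact Finset.prod_congr rfl fun j _ => zpow_add₀ (hx j) _ _

/-- Evaluation of `k[S]` at the torus point `x`. -/
noncomputable def sparseAux.eval {n : ℕ} (k : Type*) {K : Type*} [Field k] [Field K]
    [Algebra k K] (S : AddSubmonoid (Fin n → ℤ)) (x : Fin n → K) (hx : ∀ j, x j ≠ 0) :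
    AddMonoidAlgebra k S →ₐ[k] K :=
  AddMonoidAlgebra.lift k K S (sparseAux.char S x hx)

theorem sparseAux.eval_apply {n : ℕ} (k : Type*) {K : Type*} [Field k] [Field K]
    [Algebra k K] (S : AddSubmonoid (Fin n → ℤ)) (x : Fin n → K) (hx : ∀ j, x j ≠ 0)
    (f : AddMonoidAlgebra k S) :
    sparseAux.eval k S x hx f
      = f.coeff.sum fun m c => algebraMap k K c * ∏ j, x j ^ ((m : Fin n → ℤ) j) := by
  rw [sparseAux.eval, AddMonoidAlgebra.lift_apply']
  rfl

theorem sparseAux.prod_single {ι k M : Type*} [CommSemiring k] [AddCommMonoid M]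
    (t : Finset ι) (s : ι → M) :
    ∏ i ∈ t, AddMonoidAlgebra.single (s i) (1 : k)
      = AddMonoidAlgebra.single (∑ i ∈ t, s i) (1 : k) := by
  classical
  induction t using Finset.cons_induction with
  | empty => simp [AddMonoidAlgebra.one_def]
  | cons i t hi ih =>
      rw [Finset.prod_cons, Finset.sum_cons, ih, AddMonoidAlgebra.single_mul_single, one_mul]

/-- for an affine semigroup `S ⊆ ℤ^n` with Hilbert basis `{p₁,…,p_r}`,
an ideal `I ⊆ k[S]`, the monomial map `φ : k[H₁,…,H_r] → k[S]` and the monomial map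
`ψ : (k̄*)^n → k̄^r`, `x ↦ (x^{p₁},…,x^{p_r})`, one has
`ψ(Var(I) ∩ (k̄*)^n) = Var(φ⁻¹(I)) ∩ (k̄*)^r`. -/
theorem sparse_gb_stmt18 (n r : ℕ) (k K : Type*) [Field k] [Field K] [IsAlgClosed K]
    [Algebra k K]
    (S : AddSubmonoid (Fin n → ℤ))
    (hptd : ∀ s ∈ S, -s ∈ S → s = 0)
    (p : Fin r → (Fin n → ℤ)) (pS : Fin r → S)
    (hpS : ∀ i, (pS i : Fin n → ℤ) = p i)
    (hgen : AddSubmonoid.closure (Set.range p) = S)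
    (hmin : ∀ i, p i ∉ AddSubmonoid.closure (Set.range p \ {p i}))
    (I : Ideal (AddMonoidAlgebra k S))
    (φ : MvPolynomial (Fin r) k →ₐ[k] AddMonoidAlgebra k S)
    (hφ : ∀ i, φ (MvPolynomial.X i) = AddMonoidAlgebra.single (pS i) 1) :
    (fun x : Fin n → K => fun i : Fin r => ∏ j, x j ^ (p i j)) ''
        {x : Fin n → K | (∀ j, x j ≠ 0) ∧ ∀ f ∈ I,
          (f.coeff.sum fun (m : S) (c : k) =>
            algebraMap k K c * ∏ j, x j ^ ((m : Fin n → ℤ) j)) = 0} =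
      {y : Fin r → K | (∀ i, y i ≠ 0) ∧
        ∀ g ∈ Ideal.comap φ I, (MvPolynomial.aeval y) g = 0} := by
  classical
  -- the evaluation homomorphism composed with φ is `aeval` at the image point
  have hcomp : ∀ (x : Fin n → K) (hx : ∀ j, x j ≠ 0),
      (sparseAux.eval k S x hx).comp φ
        = MvPolynomial.aeval (fun i => ∏ j, x j ^ (p i j)) := by
    intro x hx
    apply MvPolynomial.algHom_ext
    intro i
    rw [AlgHom.comp_apply, hφ i, MvPolynomial.aeval_X]
    show AddMonoidAlgebra.lift k K S (sparseAux.char S x hx)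
        (AddMonoidAlgebra.single (pS i) 1) = _
    rw [AddMonoidAlgebra.lift_single, one_smul]
    show ∏ j, x j ^ ((pS i).val j) = _
    rw [hpS i]
  -- φ is surjective
  have hsurj : Function.Surjective φ := by
    have hsingle : ∀ s : S, AddMonoidAlgebra.single s (1 : k) ∈ φ.range := by
      intro s
      have hmem : (s : Fin n → ℤ) ∈ AddSubmonoid.closure (Set.range p) := by
        rw [hgen]; exact s.2
      have key : ∀ h : (s : Fin n → ℤ) ∈ S,
          AddMonoidAlgebra.single (⟨(s : Fin n → ℤ), h⟩ : S) (1 : k) ∈ φ.range := by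
        refine AddSubmonoid.closure_induction
          (motive := fun v _ => ∀ h : v ∈ S,
            AddMonoidAlgebra.single (⟨v, h⟩ : S) (1 : k) ∈ φ.range) ?_ ?_ ?_ hmem
        · rintro v ⟨i, rfl⟩ h
          have : (⟨p i, h⟩ : S) = pS i := Subtype.ext (hpS i).symm
          rw [this, ← hφ i]
          exact ⟨MvPolynomial.X i, rfl⟩
        · intro h
          have : (⟨(0 : Fin n → ℤ), h⟩ : S) = 0 := Subtype.ext rfl
          rw [this, ← AddMonoidAlgebra.one_def]
          exact one_mem _
        · intro v w hv hw ihv ihw h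
          have hvS : v ∈ S := by rw [← hgen]; exact hv
          have hwS : w ∈ S := by rw [← hgen]; exact hw
          have : (⟨v + w, h⟩ : S) = ⟨v, hvS⟩ + ⟨w, hwS⟩ := Subtype.ext rfl
          rw [this, ← one_mul (1 : k), ← AddMonoidAlgebra.single_mul_single]
          exact mul_mem (ihv hvS) (ihw hwS)
      have := key s.2
      simpa using this
    intro f
    suffices h : f ∈ φ.range by exact h
    induction f using AddMonoidAlgebra.induction_linear with
    | zero => exact zero_mem _
    | add f g hf hg => exact add_mem hf hg
    | single a b =>
        have h2 := Subalgebra.smul_mem φ.range (hsingle a) b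
        rw [AddMonoidAlgebra.smul_single', mul_one] at h2
        exact h2
  ext y
  constructor
  · rintro ⟨x, ⟨hx, hxI⟩, rfl⟩
    refine ⟨fun i => Finset.prod_ne_zero_iff.mpr fun j _ => zpow_ne_zero _ (hx j), ?_⟩
    intro g hg
    have h1 : (sparseAux.eval k S x hx) (φ g) = 0 := by
      rw [sparseAux.eval_apply]
      exact hxI (φ g) hg
    have h2 := congrArg (fun F => F g) (hcomp x hx)
    simpa [h1] using h2.symm
  · rintro ⟨hy, hker⟩
    -- the binomial relations among the `p i` are satisfied by `y`
    have hbin : ∀ a b : Fin r → ℕ, (∑ i, a i • p i) = (∑ i, b i • p i) →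
        (∏ i, y i ^ a i) = ∏ i, y i ^ b i := by
      intro a b hab
      have hmono : ∀ c : Fin r → ℕ,
          φ (∏ i, MvPolynomial.X i ^ c i)
            = AddMonoidAlgebra.single (∑ i, c i • pS i) (1 : k) := by
        intro c
        rw [map_prod]
        have : ∀ i ∈ Finset.univ, φ (MvPolynomial.X i ^ c i)
            = AddMonoidAlgebra.single (c i • pS i) (1 : k) := by
          intro i _
          rw [map_pow, hφ i, AddMonoidAlgebra.single_pow, one_pow]
        rw [Finset.prod_congr rfl this, sparseAux.prod_single]
      have hSsum : (∑ i, a i • pS i) = (∑ i, b i • pS i) := by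
        apply Subtype.ext
        have hcoe : ∀ c : Fin r → ℕ,
            ((∑ i, c i • pS i : S) : Fin n → ℤ) = ∑ i, c i • p i := by
          intro c
          rw [← hgen] at *
          push_cast [hpS]
          rfl
        rw [hcoe a, hcoe b, hab]
      have hg : ((∏ i, MvPolynomial.X i ^ a i) - ∏ i, MvPolynomial.X i ^ b i : MvPolynomial (Fin r) k)
          ∈ Ideal.comap φ I := by
        rw [Ideal.mem_comap, map_sub, hmono a, hmono b, hSsum, sub_self]
        exact zero_mem I
      have := hker _ hg
      rw [map_sub, sub_eq_zero, map_prod, map_prod] at this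
      simpa [map_pow] using this
    set yu : Fin r → Kˣ := fun i => Units.mk0 (y i) (hy i) with hyu
    -- the additive homs
    let f0 : (Fin r → ℤ) →+ (Fin n → ℤ) :=
      { toFun := fun a => ∑ i, a i • p i
        map_zero' := by simp
        map_add' := fun a b => by
          simp only [Pi.add_apply, add_smul]
          rw [Finset.sum_add_distrib] }
    let g0 : (Fin r → ℤ) →+ Additive Kˣ :=
      { toFun := fun a => Additive.ofMul (∏ i, yu i ^ a i)
        map_zero' := by simp
        map_add' := fun a b => by
          rw [← ofMul_mul, ← Finset.prod_mul_distrib]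
          exact congrArg Additive.ofMul
            (Finset.prod_congr rfl fun i _ => by rw [Pi.add_apply, zpow_add]) }
    let f := f0.toIntLinearMap
    let g := g0.toIntLinearMap
    have hkerle : LinearMap.ker f ≤ LinearMap.ker g := by
      intro a ha
      rw [LinearMap.mem_ker] at ha ⊢
      have haf : (∑ i, a i • p i) = 0 := ha
      set ap : Fin r → ℕ := fun i => (a i).toNat with hap
      set an : Fin r → ℕ := fun i => (-(a i)).toNat with han
      have hai : ∀ i, a i = (ap i : ℤ) - (an i : ℤ) := fun i => by
        simp only [hap, han]; omega
      have hsum : (∑ i, ap i • p i) = ∑ i, an i • p i := by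
        have h1 : (∑ i, ((ap i : ℤ) • p i - (an i : ℤ) • p i)) = 0 := by
          rw [← haf]
          exact Finset.sum_congr rfl fun i _ => by rw [← sub_smul, ← hai i]
        rw [Finset.sum_sub_distrib, sub_eq_zero] at h1
        simpa [natCast_zsmul] using h1
      have hy2 := hbin ap an hsum
      have hyuprod : (∏ i, yu i ^ (ap i : ℤ)) = ∏ i, yu i ^ (an i : ℤ) := by
        apply Units.ext
        push_cast [Units.val_zpow_eq_zpow_val]
        simpa [hyu, zpow_natCast] using hy2
      show Additive.ofMul (∏ i, yu i ^ a i) = 0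
      have : (∏ i, yu i ^ a i) = 1 := by
        calc (∏ i, yu i ^ a i)
            = ∏ i, (yu i ^ (ap i : ℤ) / yu i ^ (an i : ℤ)) :=
              Finset.prod_congr rfl fun i _ => by rw [hai i, zpow_sub, div_eq_mul_inv]
          _ = (∏ i, yu i ^ (ap i : ℤ)) / ∏ i, yu i ^ (an i : ℤ) := by
              rw [Finset.prod_div_distrib]
          _ = 1 := by rw [hyuprod, div_self']
      rw [this]
      rfl
    -- descend to the range of f and extend to all of ℤ^n
    let L := LinearMap.range f
    let h : L →ₗ[ℤ] Additive Kˣ :=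
      (Submodule.liftQ (LinearMap.ker f) g hkerle).comp
        (LinearMap.quotKerEquivRange f).symm.toLinearMap
    have hh : ∀ a : Fin r → ℤ, h ⟨f a, LinearMap.mem_range_self f a⟩ = g a := by
      intro a
      show (Submodule.liftQ (LinearMap.ker f) g hkerle)
          ((LinearMap.quotKerEquivRange f).symm ⟨f a, LinearMap.mem_range_self f a⟩) = g a
      rw [LinearMap.quotKerEquivRange_symm_apply_image f a, Submodule.mkQ_apply,
        Submodule.liftQ_apply]
    obtain ⟨H0, hH0⟩ := (Module.Baer.of_divisible (Additive Kˣ)).extension_property_addMonoidHom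
      L.subtype.toAddMonoidHom Subtype.val_injective h.toAddMonoidHom
    set x : Fin n → K := fun j => ((Additive.toMul (H0 (Pi.single j 1)) : Kˣ) : K) with hxdef
    have hx : ∀ j, x j ≠ 0 := fun j => Units.ne_zero _
    have hxkey : ∀ v : Fin n → ℤ, (∏ j, x j ^ (v j))
        = ((Additive.toMul (H0 v) : Kˣ) : K) := by
      intro v
      have hv : v = ∑ j, v j • Pi.single j (1 : ℤ) := by
        ext j'
        simp [Pi.single_apply, Finset.sum_apply, mul_ite]
      have : H0 v = ∑ j, v j • H0 (Pi.single j 1) := by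
        conv_lhs => rw [hv]
        rw [map_sum]
        exact Finset.sum_congr rfl fun j _ => map_zsmul H0 _ _
      rw [this, toMul_sum, ← Units.coeHom_apply, map_prod]
      refine Finset.prod_congr rfl fun j _ => ?_
      rw [Units.coeHom_apply, toMul_zsmul, Units.val_zpow_eq_zpow_val]
    let e : Fin r → (Fin r → ℤ) := fun i => Pi.single i 1
    have hfe : ∀ i, f (e i) = p i := by
      intro i
      have hrfl : f (e i) = ∑ i', e i i' • p i' := rfl
      rw [hrfl, Finset.sum_eq_single i]
      · simp [e]
      · intro i' _ hne
        simp [e, Pi.single_apply, Ne.symm hne]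
      · intro habs
        exact absurd (Finset.mem_univ i) habs
    have hH0p : ∀ i, H0 (p i) = Additive.ofMul (yu i) := by
      intro i
      have hmem : p i ∈ L := ⟨e i, hfe i⟩
      have h1 : H0 (p i) = h ⟨p i, hmem⟩ :=
        DFunLike.congr_fun hH0 (⟨p i, hmem⟩ : L)
      rw [h1]
      have h2 : (⟨p i, hmem⟩ : L) = ⟨f (e i), LinearMap.mem_range_self f _⟩ :=
        Subtype.ext (hfe i).symm
      rw [h2, hh]
      have h4 : g (e i) = Additive.ofMul (∏ i', yu i' ^ (e i i')) := rfl
      rw [h4]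
      congr 1
      rw [Finset.prod_eq_single i]
      · simp [e]
      · intro i' _ hne
        simp [e, Pi.single_apply, Ne.symm hne]
      · intro habs
        exact absurd (Finset.mem_univ i) habs
    have hψx : ∀ i, (∏ j, x j ^ (p i j)) = y i := by
      intro i
      rw [hxkey (p i), hH0p i]
      simp [hyu]
    refine ⟨x, ⟨hx, ?_⟩, funext hψx⟩
    intro f' hf'
    obtain ⟨g', rfl⟩ := hsurj f'
    have hgmem : g' ∈ Ideal.comap φ I := hf'
    have h1 : (sparseAux.eval k S x hx) (φ g') = 0 := by
      have h2 := congrArg (fun F => F g') (hcomp x hx)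
      simp only [AlgHom.comp_apply] at h2
      rw [h2]
      have : (fun i => ∏ j, x j ^ (p i j)) = y := funext hψx
      rw [this]
      exact hker g' hgmem
    rw [← sparseAux.eval_apply k S x hx]
    exact h1
end
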